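/- (Proposition 2.1, part 2: energy-norm minimality of the ideal interpolation.) Suppose A is SPD. For every n×n2 block matrix P of the form P = [W; I] (arbitrary n1×n2 top block W, identity n2×n2 bottom block) and every vector v ∈ ℝ^{n2}: (P·v)ᵀ·A·(P·v) ≥ (P⋆·v)ᵀ·A·(P⋆·v), i.e. ‖Pv‖_A ≥ ‖P⋆v‖_A; hence ‖P‖_A ≥ ‖P⋆‖_A for all such P. -/

import Mathlib

/-!
Write `P = [W; I]` as `P⋆ + [W + B⁻¹F; 0]`. By the Schur complement factorisation
`A P⋆ = [0; C - E B⁻¹ F]`, so `A P⋆ v` vanishes on the first block, where the correction lives: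
the correction is `A`-orthogonal to `P⋆ v`, and the energy of `P v` is that of `P⋆ v` plus the
nonnegative energy of the correction.
-/

open Matrix

namespace Matrix

variable {m n R : Type*}

theorem PosDef.of_fromBlocks₁₁ [Ring R] [PartialOrder R] [StarRing R] [Fintype m] [Fintype n]
    {B : Matrix m m R} {F : Matrix m n R} {E : Matrix n m R} {C : Matrix n n R}
    (h : (fromBlocks B F E C).PosDef) : B.PosDef :=
  h.submatrix Sum.inl_injective

theorem fromBlocks_mul_fromRows_neg_inv_mul [CommRing R] [Fintype m] [Fintype n] [DecidableEq m]
    [DecidableEq n] {B : Matrix m m R} (hB : IsUnit B.det) (F : Matrix m n R) (E : Matrix n m R)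
    (C : Matrix n n R) :
    fromBlocks B F E C * fromRows (-(B⁻¹ * F)) (1 : Matrix n n R) =
      fromRows 0 (C - E * B⁻¹ * F) := by
  rw [fromBlocks_mul_fromRows]
  simp [← Matrix.mul_assoc, mul_nonsing_inv B hB, sub_eq_neg_add]

theorem PosSemidef.dotProduct_mulVec_le_add [CommRing R] [PartialOrder R] [IsOrderedRing R]
    [StarRing R] [TrivialStar R] [Fintype n] {A : Matrix n n R} (hA : A.PosSemidef)
    {x u : n → R} (h : u ⬝ᵥ (A *ᵥ x) = 0) : x ⬝ᵥ (A *ᵥ x) ≤ (x + u) ⬝ᵥ (A *ᵥ (x + u)) := by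
  have h' : x ⬝ᵥ (A *ᵥ u) = 0 := by
    rw [dotProduct_mulVec, ← mulVec_transpose, dotProduct_comm,
      ← conjTranspose_eq_transpose_of_trivial, hA.isHermitian.eq, h]
  have hu : 0 ≤ u ⬝ᵥ (A *ᵥ u) := by simpa using hA.dotProduct_mulVec_nonneg u
  rw [mulVec_add, dotProduct_add, add_dotProduct, add_dotProduct, h, h', add_zero, zero_add]
  exact le_add_of_nonneg_right hu

end Matrix

theorem stmt_5_general (n1 n2 : ℕ)
    (B : Matrix (Fin n1) (Fin n1) ℝ) (F : Matrix (Fin n1) (Fin n2) ℝ)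
    (E : Matrix (Fin n2) (Fin n1) ℝ) (C : Matrix (Fin n2) (Fin n2) ℝ)
    (A : Matrix (Fin n1 ⊕ Fin n2) (Fin n1 ⊕ Fin n2) ℝ) (hA : A = Matrix.fromBlocks B F E C)
    (hSPD : A.PosDef)
    (Pstar : Matrix (Fin n1 ⊕ Fin n2) (Fin n2) ℝ)
    (hP : Pstar = Matrix.fromRows (-(B⁻¹ * F)) (1 : Matrix (Fin n2) (Fin n2) ℝ)) :
    ∀ (W : Matrix (Fin n1) (Fin n2) ℝ) (v : Fin n2 → ℝ),
      (Pstar *ᵥ v) ⬝ᵥ (A *ᵥ (Pstar *ᵥ v)) ≤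
        (Matrix.fromRows W (1 : Matrix (Fin n2) (Fin n2) ℝ) *ᵥ v) ⬝ᵥ
          (A *ᵥ (Matrix.fromRows W (1 : Matrix (Fin n2) (Fin n2) ℝ) *ᵥ v)) ∧
      Real.sqrt ((Pstar *ᵥ v) ⬝ᵥ (A *ᵥ (Pstar *ᵥ v))) ≤
        Real.sqrt ((Matrix.fromRows W (1 : Matrix (Fin n2) (Fin n2) ℝ) *ᵥ v) ⬝ᵥ
          (A *ᵥ (Matrix.fromRows W (1 : Matrix (Fin n2) (Fin n2) ℝ) *ᵥ v))) := by
  intro W v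
  have hB : IsUnit B.det := (isUnit_iff_isUnit_det B).mp (hA ▸ hSPD).of_fromBlocks₁₁.isUnit
  set correction : Fin n1 ⊕ Fin n2 → ℝ := Sum.elim ((W + B⁻¹ * F) *ᵥ v) 0
  have hsplit : fromRows W 1 *ᵥ v = Pstar *ᵥ v + correction := by
    ext (i | i) <;> simp [correction, hP, add_mulVec, neg_mulVec]
  have horth : correction ⬝ᵥ (A *ᵥ (Pstar *ᵥ v)) = 0 := by
    rw [mulVec_mulVec, hA, hP, fromBlocks_mul_fromRows_neg_inv_mul hB, fromRows_mulVec,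
      sumElim_dotProduct_sumElim]
    simp
  have henergy := hSPD.posSemidef.dotProduct_mulVec_le_add horth
  rw [← hsplit] at henergy
  exact ⟨henergy, Real.sqrt_le_sqrt henergy⟩

/-- Proposition 2.1 (part 2): energy-norm minimality of the ideal interpolation. For SPD `A`,
any `P = [W; I]` and any `v`: `‖Pv‖²_A ≥ ‖P⋆v‖²_A`, hence `‖Pv‖_A ≥ ‖P⋆v‖_A`. -/
theorem stmt_5 (n1 n2 : ℕ) (hn1 : 0 < n1) (hn2 : 0 < n2)
    (B : Matrix (Fin n1) (Fin n1) ℝ) (F : Matrix (Fin n1) (Fin n2) ℝ)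
    (E : Matrix (Fin n2) (Fin n1) ℝ) (C : Matrix (Fin n2) (Fin n2) ℝ)
    (A : Matrix (Fin n1 ⊕ Fin n2) (Fin n1 ⊕ Fin n2) ℝ) (hA : A = Matrix.fromBlocks B F E C)
    (hSPD : A.PosDef)
    (Pstar : Matrix (Fin n1 ⊕ Fin n2) (Fin n2) ℝ)
    (hP : Pstar = Matrix.fromRows (-(B⁻¹ * F)) (1 : Matrix (Fin n2) (Fin n2) ℝ)) :
    ∀ (W : Matrix (Fin n1) (Fin n2) ℝ) (v : Fin n2 → ℝ),
      (Pstar *ᵥ v) ⬝ᵥ (A *ᵥ (Pstar *ᵥ v)) ≤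
        (Matrix.fromRows W (1 : Matrix (Fin n2) (Fin n2) ℝ) *ᵥ v) ⬝ᵥ
          (A *ᵥ (Matrix.fromRows W (1 : Matrix (Fin n2) (Fin n2) ℝ) *ᵥ v)) ∧
      Real.sqrt ((Pstar *ᵥ v) ⬝ᵥ (A *ᵥ (Pstar *ᵥ v))) ≤
        Real.sqrt ((Matrix.fromRows W (1 : Matrix (Fin n2) (Fin n2) ℝ) *ᵥ v) ⬝ᵥ
          (A *ᵥ (Matrix.fromRows W (1 : Matrix (Fin n2) (Fin n2) ℝ) *ᵥ v))) :=
  stmt_5_general n1 n2 B F E C A hA hSPD Pstar hP
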